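/- If G has an efficient dominating set and H is a Roman graph, then the strong product G ⊠ H is a Roman graph, i.e., γ_R(G ⊠ H) = 2γ(G ⊠ H). -/

import Mathlib

open Finset

/-- A set `S` is a dominating set of `G` if every vertex outside `S` has a neighbor in `S`. -/
def IsDominatingSet {V : Type*} (G : SimpleGraph V) (S : Set V) : Prop :=
  ∀ v, v ∉ S → ∃ u ∈ S, G.Adj u v

/-- The domination number `γ(G)`. -/
noncomputable def domNum {V : Type*} [Fintype V] (G : SimpleGraph V) : ℕ :=
  sInf {n | ∃ S : Finset V, IsDominatingSet G ↑S ∧ S.card = n}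

/-- A Roman dominating function: values in {0,1,2}, every vertex of value 0 has a
neighbor of value 2. -/
def IsRDF {V : Type*} (G : SimpleGraph V) (f : V → ℕ) : Prop :=
  (∀ v, f v ≤ 2) ∧ ∀ v, f v = 0 → ∃ u, G.Adj u v ∧ f u = 2

/-- The Roman domination number `γ_R(G)`. -/
noncomputable def romanDomNum {V : Type*} [Fintype V] (G : SimpleGraph V) : ℕ :=
  sInf {n | ∃ f : V → ℕ, IsRDF G f ∧ ∑ v, f v = n}

/-- The strong product of graphs. -/
def strongProd {V W : Type*} (G : SimpleGraph V) (H : SimpleGraph W) :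
    SimpleGraph (V × W) where
  Adj x y := x ≠ y ∧ (x.1 = y.1 ∨ G.Adj x.1 y.1) ∧ (x.2 = y.2 ∨ H.Adj x.2 y.2)
  symm := ⟨fun x y => by
    rintro ⟨h, h1, h2⟩
    refine ⟨h.symm, ?_, ?_⟩
    · cases h1 with
      | inl h => exact Or.inl h.symm
      | inr h => exact Or.inr h.symm
    · cases h2 with
      | inl h => exact Or.inl h.symm
      | inr h => exact Or.inr h.symm⟩
  loopless := ⟨fun x => by simp⟩

/-- `G` has an efficient dominating set: a dominating set whose elements have
pairwise disjoint closed neighborhoods. -/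
def HasEfficientDomSet {V : Type*} (G : SimpleGraph V) : Prop :=
  ∃ S : Finset V, IsDominatingSet G ↑S ∧
    ∀ u ∈ S, ∀ v ∈ S, u ≠ v →
      Disjoint (insert u (G.neighborSet u)) (insert v (G.neighborSet v))

/-!
Lower bound: if `D` is an efficient dominating set of `G` and `f` is a Roman dominating
function of `G ⊠ H`, then for each `g ∈ D` the sums of `f` over the fibres `N[g] × {w}`,
capped at `2`, form a Roman dominating function of `H`. The closed neighbourhoods of `D`
are disjoint, so `γ(G) γ_R(H) ≤ |D| γ_R(H) ≤ γ_R(G ⊠ H)`. Upper bound: products of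
dominating sets dominate the strong product, so with `γ_R(H) = 2γ(H)` we get
`γ_R(G ⊠ H) ≤ 2γ(G ⊠ H) ≤ 2γ(G)γ(H) = γ(G)γ_R(H) ≤ γ_R(G ⊠ H)`.
-/

section Basic

variable {V : Type*} {G : SimpleGraph V}

lemma IsDominatingSet.isRDF_indicator [DecidableEq V] {S : Finset V}
    (hS : IsDominatingSet G ↑S) : IsRDF G fun v => if v ∈ S then 2 else 0 := by
  refine ⟨fun v => by dsimp only; split <;> omega, fun v hv => ?_⟩
  have hvS : v ∉ S := fun h => by simp [h] at hv
  obtain ⟨u, hu, hadj⟩ := hS v hvS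
  exact ⟨u, hadj, if_pos hu⟩

variable [Fintype V] (G)

lemma exists_isDominatingSet_card_eq_domNum :
    ∃ S : Finset V, IsDominatingSet G ↑S ∧ S.card = domNum G :=
  Nat.sInf_mem (s := {n | ∃ S : Finset V, IsDominatingSet G ↑S ∧ S.card = n})
    ⟨_, univ, fun _ hv => absurd (mem_coe.mpr (mem_univ _)) hv, rfl⟩

variable {G}

lemma domNum_le_card {S : Finset V} (hS : IsDominatingSet G ↑S) : domNum G ≤ S.card :=
  Nat.sInf_le ⟨S, hS, rfl⟩

lemma romanDomNum_le_sum {f : V → ℕ} (hf : IsRDF G f) : romanDomNum G ≤ ∑ v, f v :=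
  Nat.sInf_le ⟨f, hf, rfl⟩

lemma le_romanDomNum {n : ℕ} (h : ∀ f, IsRDF G f → n ≤ ∑ v, f v) : n ≤ romanDomNum G :=
  le_csInf ⟨_, fun _ => 1, ⟨fun _ => one_le_two, fun _ h => absurd h one_ne_zero⟩, rfl⟩
    (by rintro _ ⟨f, hf, rfl⟩; exact h f hf)

variable (G)

lemma romanDomNum_le_two_mul_domNum : romanDomNum G ≤ 2 * domNum G := by
  classical
  obtain ⟨S, hS, hcard⟩ := exists_isDominatingSet_card_eq_domNum G
  calc romanDomNum G ≤ ∑ v, if v ∈ S then 2 else 0 := romanDomNum_le_sum hS.isRDF_indicator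
    _ = 2 * domNum G := by rw [sum_ite_mem, univ_inter, sum_const, smul_eq_mul, hcard, mul_comm]

open Classical in
noncomputable def closedNbhd (v : V) : Finset V := (insert v (G.neighborSet v)).toFinset

variable {G}

lemma mem_closedNbhd {u v : V} : u ∈ closedNbhd G v ↔ u = v ∨ G.Adj v u := by
  simp [closedNbhd]

lemma coe_closedNbhd (v : V) : (closedNbhd G v : Set V) = insert v (G.neighborSet v) := by
  simp [closedNbhd]

end Basic

section StrongProduct

variable {V W : Type*} {G : SimpleGraph V} {H : SimpleGraph W}

lemma IsDominatingSet.exists_eq_or_adj {S : Set V} (hS : IsDominatingSet G S) (x : V) :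
    ∃ u ∈ S, u = x ∨ G.Adj u x := by
  by_cases hx : x ∈ S
  · exact ⟨x, hx, Or.inl rfl⟩
  · obtain ⟨u, hu, hadj⟩ := hS x hx
    exact ⟨u, hu, Or.inr hadj⟩

lemma IsDominatingSet.strongProd {S : Set V} {T : Set W} (hS : IsDominatingSet G S)
    (hT : IsDominatingSet H T) : IsDominatingSet (strongProd G H) (S ×ˢ T) := by
  intro p hp
  obtain ⟨u, hu, hu'⟩ := hS.exists_eq_or_adj p.1
  obtain ⟨x, hx, hx'⟩ := hT.exists_eq_or_adj p.2
  exact ⟨(u, x), ⟨hu, hx⟩, fun h => hp (h ▸ ⟨hu, hx⟩), hu', hx'⟩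

variable [Fintype V]

lemma IsRDF.min_two_sum_closedNbhd {f : V × W → ℕ} (hf : IsRDF (strongProd G H) f) (g : V) :
    IsRDF H fun w => min 2 (∑ v ∈ closedNbhd G g, f (v, w)) := by
  obtain ⟨-, hf0⟩ := hf
  refine ⟨fun w => min_le_left _ _, fun w hw => ?_⟩
  have hzero : ∀ v ∈ closedNbhd G g, f (v, w) = 0 := by
    refine sum_eq_zero_iff.mp ?_
    rcases Nat.min_eq_zero_iff.mp hw with h | h
    · omega
    · exact h
  obtain ⟨p, ⟨-, h1, h2⟩, hp⟩ := hf0 (g, w) (hzero g (mem_closedNbhd.mpr (Or.inl rfl)))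
  have hp1 : p.1 ∈ closedNbhd G g := mem_closedNbhd.mpr (h1.imp id SimpleGraph.Adj.symm)
  rcases h2 with h | h
  · have hp0 := hzero p.1 hp1
    rw [← show p.2 = w from h, Prod.mk.eta] at hp0
    omega
  · refine ⟨p.2, h, min_eq_left ?_⟩
    calc 2 = f (p.1, p.2) := hp.symm
      _ ≤ ∑ v ∈ closedNbhd G g, f (v, p.2) :=
        single_le_sum (f := fun v => f (v, p.2)) (fun _ _ => Nat.zero_le _) hp1

variable [Fintype W]

lemma domNum_strongProd_le (G : SimpleGraph V) (H : SimpleGraph W) :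
    domNum (strongProd G H) ≤ domNum G * domNum H := by
  classical
  obtain ⟨S, hS, hcS⟩ := exists_isDominatingSet_card_eq_domNum G
  obtain ⟨T, hT, hcT⟩ := exists_isDominatingSet_card_eq_domNum H
  calc domNum (strongProd G H) ≤ (S ×ˢ T).card :=
        domNum_le_card (by rw [coe_product]; exact hS.strongProd hT)
    _ = domNum G * domNum H := by rw [card_product, hcS, hcT]

lemma card_mul_romanDomNum_le_of_pairwiseDisjoint (H : SimpleGraph W) {D : Finset V}
    (hD : ∀ u ∈ D, ∀ v ∈ D, u ≠ v →
      Disjoint (insert u (G.neighborSet u)) (insert v (G.neighborSet v))) :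
    D.card * romanDomNum H ≤ romanDomNum (strongProd G H) := by
  classical
  have hdisj : (D : Set V).PairwiseDisjoint (closedNbhd G) := fun u hu v hv huv => by
    rw [Function.onFun, ← disjoint_coe, coe_closedNbhd, coe_closedNbhd]
    exact hD u hu v hv huv
  refine le_romanDomNum fun f hf => ?_
  calc D.card * romanDomNum H = ∑ _g ∈ D, romanDomNum H := by rw [sum_const, smul_eq_mul]
    _ ≤ ∑ g ∈ D, ∑ w, min 2 (∑ v ∈ closedNbhd G g, f (v, w)) :=
        sum_le_sum fun g _ => romanDomNum_le_sum (hf.min_two_sum_closedNbhd g)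
    _ ≤ ∑ g ∈ D, ∑ w, ∑ v ∈ closedNbhd G g, f (v, w) :=
        sum_le_sum fun _ _ => sum_le_sum fun _ _ => min_le_right _ _
    _ = ∑ v ∈ D.biUnion (closedNbhd G), ∑ w, f (v, w) := by
        rw [sum_biUnion hdisj]
        exact sum_congr rfl fun _ _ => sum_comm
    _ ≤ ∑ v, ∑ w, f (v, w) := sum_le_sum_of_subset (subset_univ _)
    _ = ∑ p, f p := (Fintype.sum_prod_type _).symm

end StrongProduct

theorem stmt19 {V W : Type*} [Fintype V] [Fintype W]
    (G : SimpleGraph V) (H : SimpleGraph W) (hG : HasEfficientDomSet G)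
    (hRoman : romanDomNum H = 2 * domNum H) :
    romanDomNum (strongProd G H) = 2 * domNum (strongProd G H) := by
  obtain ⟨D, hDdom, hDdisj⟩ := hG
  refine le_antisymm (romanDomNum_le_two_mul_domNum _) ?_
  calc 2 * domNum (strongProd G H) ≤ 2 * (domNum G * domNum H) :=
        Nat.mul_le_mul_left _ (domNum_strongProd_le G H)
    _ = domNum G * romanDomNum H := by rw [hRoman]; ring
    _ ≤ D.card * romanDomNum H := Nat.mul_le_mul_right _ (domNum_le_card hDdom)
    _ ≤ romanDomNum (strongProd G H) := card_mul_romanDomNum_le_of_pairwiseDisjoint H hDdisj
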